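/- arXiv:1503.00195 — 4 statements merged into one kernel-verified Lean document; each statement's English description precedes it below -/
import Mathlib

section
/- Assume the wind point forecasts satisfy Ŵ_j ≤ P_j^{W,max} for all wind units j. Let (p, p^W, R^+, R^-, δ̂, f̂) be any feasible point of Model D with objective value z^D, and for each scenario ω ∈ Ω let (r^+_ω, r^-_ω, p^spill_ω, l^sh_ω, δ̃_ω, f̃_ω) be any feasible point of Model B with inputs p*_W = p^W, f̂* = f̂, R* = (R^+, R^-) and realization P*_{·ω}, with objective value z^B_ω. Then the combined point (first-stage variables from the Model D solution, per-scenario variables from the Model B solutions) is feasible for Model S, its Model S objective value equals z^D + Σ_ω π_ω z^B_ω, and hence OptS ≤ z^D + Σ_ω π_ω z^B_ω. In particular, the optimal expected cost of the stochastic market clearing is at most the in-sample expected cost of the deterministic energy–reserve co-optimization design. -/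
open Finset MeasureTheory ProbabilityTheory

noncomputable section

variable {N I J L Ω Ar : Type*} [Fintype N] [Fintype I] [Fintype J] [Fintype L]
  [Fintype Ω] [Fintype Ar] [DecidableEq N] [DecidableEq Ar]
/-- Feasibility of Model S (stochastic energy–reserve co-optimization LP). -/
def SFeas (n0 : N) (busI : I → N) (busJ : J → N) (AC : L → Prop)
    (D : N → ℝ) (Pmax : I → ℝ) (PWmax : J → ℝ) (Rpmax Rmmax : I → ℝ)
    (fmax Bsus : L → ℝ) (Ainc : L → N → ℝ) (Pst : J → Ω → ℝ)
    (p : I → ℝ) (pW : J → ℝ) (Rp Rm : I → ℝ)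
    (rp rm : I → Ω → ℝ) (spill : J → Ω → ℝ) (lsh : N → Ω → ℝ)
    (dh : N → ℝ) (dt : N → Ω → ℝ) (fh : L → ℝ) (ft : L → Ω → ℝ) : Prop :=
  (∀ n, (∑ j, if busJ j = n then pW j else 0) + (∑ i, if busI i = n then p i else 0)
      - D n - ∑ l, Ainc l n * fh l = 0) ∧
  (∀ n ω, (∑ i, if busI i = n then rp i ω - rm i ω else 0) + lsh n ω
      + (∑ j, if busJ j = n then Pst j ω - pW j - spill j ω else 0)
      + ∑ l, Ainc l n * (fh l - ft l ω) = 0) ∧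
  (∀ j, pW j ≤ PWmax j) ∧
  (∀ i, p i + Rp i ≤ Pmax i) ∧
  (∀ i, 0 ≤ p i - Rm i) ∧
  (∀ i, Rp i ≤ Rpmax i) ∧ (∀ i, Rm i ≤ Rmmax i) ∧
  (∀ i ω, rp i ω ≤ Rp i) ∧ (∀ i ω, rm i ω ≤ Rm i) ∧
  (∀ l, AC l → fh l = Bsus l * ∑ n, Ainc l n * dh n) ∧
  (∀ l ω, AC l → ft l ω = Bsus l * ∑ n, Ainc l n * dt n ω) ∧
  (∀ l, |fh l| ≤ fmax l) ∧ (∀ l ω, |ft l ω| ≤ fmax l) ∧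
  (∀ n ω, lsh n ω ≤ D n) ∧ (∀ j ω, spill j ω ≤ Pst j ω) ∧
  (dh n0 = 0) ∧ (∀ ω, dt n0 ω = 0) ∧
  (∀ i, 0 ≤ p i) ∧ (∀ j, 0 ≤ pW j) ∧ (∀ i, 0 ≤ Rp i) ∧ (∀ i, 0 ≤ Rm i) ∧
  (∀ i ω, 0 ≤ rp i ω) ∧ (∀ i ω, 0 ≤ rm i ω) ∧
  (∀ j ω, 0 ≤ spill j ω) ∧ (∀ n ω, 0 ≤ lsh n ω)

/-- Objective of Model S: day-ahead cost plus expected balancing cost. -/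
def SObj (π : Ω → ℝ) (C CRp CRm : I → ℝ) (Csh : ℝ)
    (p Rp Rm : I → ℝ) (rp rm : I → Ω → ℝ) (lsh : N → Ω → ℝ) : ℝ :=
  (∑ i, (C i * p i + CRp i * Rp i + CRm i * Rm i))
    + ∑ ω, π ω * ((∑ i, C i * (rp i ω - rm i ω)) + ∑ n, Csh * lsh n ω)
/-- Feasibility of Model D (deterministic day-ahead energy–reserve co-optimization LP). -/
def DFeas (n0 : N) (busI : I → N) (busJ : J → N) (AC : L → Prop)
    (D : N → ℝ) (Pmax : I → ℝ) (What : J → ℝ) (Rpmax Rmmax : I → ℝ)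
    (RRsp RRsm : ℝ) (fmax Bsus : L → ℝ) (Ainc : L → N → ℝ)
    (p : I → ℝ) (pW : J → ℝ) (Rp Rm : I → ℝ) (dh : N → ℝ) (fh : L → ℝ) : Prop :=
  (∀ n, (∑ j, if busJ j = n then pW j else 0) + (∑ i, if busI i = n then p i else 0)
      - D n - ∑ l, Ainc l n * fh l = 0) ∧
  (∀ j, pW j ≤ What j) ∧
  (∀ i, p i + Rp i ≤ Pmax i) ∧
  (∀ i, 0 ≤ p i - Rm i) ∧
  (∀ i, Rp i ≤ Rpmax i) ∧ (∀ i, Rm i ≤ Rmmax i) ∧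
  (RRsp ≤ ∑ i, Rp i) ∧ (RRsm ≤ ∑ i, Rm i) ∧
  (∀ l, AC l → fh l = Bsus l * ∑ n, Ainc l n * dh n) ∧
  (∀ l, |fh l| ≤ fmax l) ∧
  (dh n0 = 0) ∧
  (∀ i, 0 ≤ p i) ∧ (∀ j, 0 ≤ pW j) ∧ (∀ i, 0 ≤ Rp i) ∧ (∀ i, 0 ≤ Rm i)

/-- Objective of Model D: energy plus reserve capacity cost. -/
def DObj (C CRp CRm : I → ℝ) (p Rp Rm : I → ℝ) : ℝ :=
  ∑ i, (C i * p i + CRp i * Rp i + CRm i * Rm i)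
/-- Feasibility of Model B (balancing LP) for fixed day-ahead wind schedule `pWst`,
day-ahead flows `fhst`, reserve capacities `Rpst`, `Rmst` and wind realization `Pst`. -/
def BFeas (n0 : N) (busI : I → N) (busJ : J → N) (AC : L → Prop)
    (D : N → ℝ) (fmax Bsus : L → ℝ) (Ainc : L → N → ℝ)
    (pWst : J → ℝ) (fhst : L → ℝ) (Rpst Rmst : I → ℝ) (Pst : J → ℝ)
    (rp rm : I → ℝ) (spill : J → ℝ) (lsh : N → ℝ) (dt : N → ℝ) (ft : L → ℝ) : Prop :=
  (∀ n, (∑ i, if busI i = n then rp i - rm i else 0) + lsh n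
      + (∑ j, if busJ j = n then Pst j - pWst j - spill j else 0)
      + ∑ l, Ainc l n * (fhst l - ft l) = 0) ∧
  (∀ i, rp i ≤ Rpst i) ∧ (∀ i, rm i ≤ Rmst i) ∧
  (∀ l, AC l → ft l = Bsus l * ∑ n, Ainc l n * dt n) ∧
  (∀ l, |ft l| ≤ fmax l) ∧
  (∀ n, lsh n ≤ D n) ∧ (∀ j, spill j ≤ Pst j) ∧
  (dt n0 = 0) ∧
  (∀ i, 0 ≤ rp i) ∧ (∀ i, 0 ≤ rm i) ∧ (∀ j, 0 ≤ spill j) ∧ (∀ n, 0 ≤ lsh n)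

/-- Objective of Model B: redispatch plus load-shedding cost. -/
def BObj (C : I → ℝ) (Csh : ℝ) (rp rm : I → ℝ) (lsh : N → ℝ) : ℝ :=
  (∑ i, C i * (rp i - rm i)) + ∑ n, Csh * lsh n
/-- any feasible point of Model D combined with per-scenario feasible
points of Model B yields a feasible point of Model S whose objective is
`zD + ∑ ω, π ω * zB ω`; hence OptS is at most the in-sample expected cost of the
deterministic energy–reserve co-optimization design. -/
theorem optS_le_deterministic_cooptimization
    (n0 : N) (busI : I → N) (busJ : J → N) (AC : L → Prop)
    (π : Ω → ℝ) (C CRp CRm : I → ℝ) (Csh : ℝ)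
    (D : N → ℝ) (Pmax : I → ℝ) (PWmax What : J → ℝ)
    (Rpmax Rmmax : I → ℝ) (RRsp RRsm : ℝ)
    (fmax Bsus : L → ℝ) (Ainc : L → N → ℝ) (Pst : J → Ω → ℝ)
    (hπ : ∀ ω, 0 ≤ π ω) (hπ1 : ∑ ω, π ω = 1)
    (hC : ∀ i, 0 ≤ C i) (hCRp : ∀ i, 0 ≤ CRp i) (hCRm : ∀ i, 0 ≤ CRm i) (hCsh : 0 ≤ Csh)
    (hD : ∀ n, 0 ≤ D n) (hPmax : ∀ i, 0 ≤ Pmax i) (hPWmax : ∀ j, 0 ≤ PWmax j)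
    (hRpmax : ∀ i, 0 ≤ Rpmax i) (hRmmax : ∀ i, 0 ≤ Rmmax i)
    (hRRsp : 0 ≤ RRsp) (hRRsm : 0 ≤ RRsm)
    (hfmax : ∀ l, 0 ≤ fmax l) (hBsus : ∀ l, 0 ≤ Bsus l)
    (hAinc : ∀ l n, Ainc l n = -1 ∨ Ainc l n = 0 ∨ Ainc l n = 1)
    (hPst : ∀ j ω, 0 ≤ Pst j ω)
    (hWhat : ∀ j, 0 ≤ What j)
    -- wind point forecasts do not exceed the wind capacities
    (hWle : ∀ j, What j ≤ PWmax j)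
    -- a feasible point of Model D with objective value zD
    (p : I → ℝ) (pW : J → ℝ) (Rp Rm : I → ℝ) (dh : N → ℝ) (fh : L → ℝ) (zD : ℝ)
    (hDfeas : DFeas n0 busI busJ AC D Pmax What Rpmax Rmmax RRsp RRsm fmax Bsus Ainc
        p pW Rp Rm dh fh)
    (hDobj : DObj C CRp CRm p Rp Rm = zD)
    -- for each scenario, a feasible point of Model B with objective value zB ω
    (rp rm : I → Ω → ℝ) (spill : J → Ω → ℝ) (lsh : N → Ω → ℝ)
    (dt : N → Ω → ℝ) (ft : L → Ω → ℝ) (zB : Ω → ℝ)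
    (hBfeas : ∀ ω, BFeas n0 busI busJ AC D fmax Bsus Ainc pW fh Rp Rm
        (fun j => Pst j ω) (fun i => rp i ω) (fun i => rm i ω) (fun j => spill j ω)
        (fun n => lsh n ω) (fun n => dt n ω) (fun l => ft l ω))
    (hBobj : ∀ ω, BObj C Csh (fun i => rp i ω) (fun i => rm i ω) (fun n => lsh n ω) = zB ω) :
    SFeas n0 busI busJ AC D Pmax PWmax Rpmax Rmmax fmax Bsus Ainc Pst
        p pW Rp Rm rp rm spill lsh dh dt fh ft ∧
    SObj π C CRp CRm Csh p Rp Rm rp rm lsh = zD + ∑ ω, π ω * zB ω ∧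
    sInf {z : ℝ | ∃ (p' : I → ℝ) (pW' : J → ℝ) (Rp' Rm' : I → ℝ)
        (rp' rm' : I → Ω → ℝ) (spill' : J → Ω → ℝ) (lsh' : N → Ω → ℝ)
        (dh' : N → ℝ) (dt' : N → Ω → ℝ) (fh' : L → ℝ) (ft' : L → Ω → ℝ),
        SFeas n0 busI busJ AC D Pmax PWmax Rpmax Rmmax fmax Bsus Ainc Pst
          p' pW' Rp' Rm' rp' rm' spill' lsh' dh' dt' fh' ft' ∧
        SObj π C CRp CRm Csh p' Rp' Rm' rp' rm' lsh' = z}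
      ≤ zD + ∑ ω, π ω * zB ω := by
  obtain ⟨hD1, hD2, hD3, hD4, hD5, hD6, _, _, hD9, hD10, hD11, hD12, hD13, hD14, hD15⟩ := hDfeas
  have hSfeas : SFeas n0 busI busJ AC D Pmax PWmax Rpmax Rmmax fmax Bsus Ainc Pst
      p pW Rp Rm rp rm spill lsh dh dt fh ft :=
    ⟨hD1, fun n ω => (hBfeas ω).1 n, fun j => le_trans (hD2 j) (hWle j), hD3, hD4, hD5, hD6,
      fun i ω => (hBfeas ω).2.1 i, fun i ω => (hBfeas ω).2.2.1 i,
      hD9, fun l ω h => (hBfeas ω).2.2.2.1 l h, hD10, fun l ω => (hBfeas ω).2.2.2.2.1 l,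
      fun n ω => (hBfeas ω).2.2.2.2.2.1 n, fun j ω => (hBfeas ω).2.2.2.2.2.2.1 j,
      hD11, fun ω => (hBfeas ω).2.2.2.2.2.2.2.1,
      hD12, hD13, hD14, hD15,
      fun i ω => (hBfeas ω).2.2.2.2.2.2.2.2.1 i,
      fun i ω => (hBfeas ω).2.2.2.2.2.2.2.2.2.1 i,
      fun j ω => (hBfeas ω).2.2.2.2.2.2.2.2.2.2.1 j,
      fun n ω => (hBfeas ω).2.2.2.2.2.2.2.2.2.2.2 n⟩
  have hObj : SObj π C CRp CRm Csh p Rp Rm rp rm lsh = zD + ∑ ω, π ω * zB ω := by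
    simp only [SObj]
    rw [← hDobj]
    simp only [DObj]
    congr 1
    refine Finset.sum_congr rfl fun ω _ => ?_
    rw [← hBobj ω]
    rfl
  refine ⟨hSfeas, hObj, ?_⟩
  apply csInf_le
  · refine ⟨-(∑ i, C i * Rmmax i), fun z hz => ?_⟩
    obtain ⟨p', pW', Rp', Rm', rp', rm', spill', lsh', dh', dt', fh', ft', hF, hO⟩ := hz
    obtain ⟨-, -, -, -, -, -, h7, -, h9, -, -, -, -, -, -, -, -, h18, -, h20, h21, h22, -, -, h25⟩ := hF
    rw [← hO]
    simp only [SObj]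
    have hA : 0 ≤ ∑ i, (C i * p' i + CRp i * Rp' i + CRm i * Rm' i) :=
      Finset.sum_nonneg fun i _ => add_nonneg (add_nonneg (mul_nonneg (hC i) (h18 i))
        (mul_nonneg (hCRp i) (h20 i))) (mul_nonneg (hCRm i) (h21 i))
    have hX : ∀ ω, -(∑ i, C i * Rmmax i)
        ≤ (∑ i, C i * (rp' i ω - rm' i ω)) + ∑ n, Csh * lsh' n ω := by
      intro ω
      have h1 : ∀ i, -(C i * Rmmax i) ≤ C i * (rp' i ω - rm' i ω) := by
        intro i
        have hle : 0 - Rmmax i ≤ rp' i ω - rm' i ω :=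
          sub_le_sub (h22 i ω) (le_trans (h9 i ω) (h7 i))
        have := mul_le_mul_of_nonneg_left hle (hC i)
        nlinarith
      have hsum := Finset.sum_le_sum (fun i (_ : i ∈ Finset.univ) => h1 i)
      have h2 : 0 ≤ ∑ n, Csh * lsh' n ω :=
        Finset.sum_nonneg fun n _ => mul_nonneg hCsh (h25 n ω)
      calc -(∑ i, C i * Rmmax i) = ∑ i, -(C i * Rmmax i) := by simp
        _ ≤ ∑ i, C i * (rp' i ω - rm' i ω) := hsum
        _ ≤ _ := le_add_of_nonneg_right h2
    calc -(∑ i, C i * Rmmax i)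
        = ∑ ω, π ω * (-(∑ i, C i * Rmmax i)) := by
          rw [← Finset.sum_mul, hπ1, one_mul]
      _ ≤ ∑ ω, π ω * ((∑ i, C i * (rp' i ω - rm' i ω)) + ∑ n, Csh * lsh' n ω) :=
          Finset.sum_le_sum fun ω _ => mul_le_mul_of_nonneg_left (hX ω) (hπ ω)
      _ ≤ _ := le_add_of_nonneg_left hA
  · exact ⟨p, pW, Rp, Rm, rp, rm, spill, lsh, dh, dt, fh, ft, hSfeas, hObj⟩
end
end

section
/- Assume X_l ∈ [0,1] for every line l and Ŵ_j ≤ P_j^{W,max} for all wind units j. Let (R^+_{ia}, R^-_{ia}) be any feasible point of Model R with objective value z^R, set R_i^± := Σ_a R^±_{ia}, let (p, p^W, δ̂, f̂) be any feasible point of Model E (with reserve schedule R*_{ia} = R_{ia} and the same allocation X) with objective value z^E, and for each scenario ω ∈ Ω let (r^+_ω, r^-_ω, p^spill_ω, l^sh_ω, δ̃_ω, f̃_ω) be any feasible point of Model B with inputs p*_W = p^W, f̂* = f̂, R* = (R^+, R^-) and realization P*_{·ω}, with objective value z^B_ω. Then the combined point is feasible for Model S with Model S objective value z^R + z^E + Σ_ω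 π_ω z^B_ω, and hence OptS ≤ z^R + z^E + Σ_ω π_ω z^B_ω. In particular, the optimal expected cost of the stochastic market clearing is at most the in-sample expected cost of the sequential reserve-then-energy market design. -/
open Finset MeasureTheory ProbabilityTheory

noncomputable section

variable {N I J L Ω Ar : Type*} [Fintype N] [Fintype I] [Fintype J] [Fintype L]
  [Fintype Ω] [Fintype Ar] [DecidableEq N] [DecidableEq Ar]
/-- Feasibility of Model R (reserve capacity market LP) with areas `Ar`,
area assignment `areaI`, allocation parameters `X` and inter-area line sets `M`. -/
def RFeas (areaI : I → Ar) (Pmax Rpmax Rmmax : I → ℝ)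
    (RRp RRm : Ar → ℝ) (fmax : L → ℝ) (X : L → ℝ) (M : Ar → Ar → Finset L)
    (Rpa Rma : I → Ar → ℝ) : Prop :=
  (∀ i, ∑ a, Rpa i a ≤ Rpmax i) ∧
  (∀ i, ∑ a, Rma i a ≤ Rmmax i) ∧
  (∀ i, ∑ a, (Rpa i a + Rma i a) ≤ Pmax i) ∧
  (∀ a, RRp a ≤ ∑ i, Rpa i a) ∧
  (∀ a, RRm a ≤ ∑ i, Rma i a) ∧
  (∀ a b, b ≠ a → (∑ i, if areaI i = b then Rpa i a else 0) ≤ ∑ l ∈ M a b, X l * fmax l) ∧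
  (∀ a b, b ≠ a → (∑ i, if areaI i = b then Rma i a else 0) ≤ ∑ l ∈ M a b, X l * fmax l) ∧
  (∀ i a, 0 ≤ Rpa i a) ∧ (∀ i a, 0 ≤ Rma i a)

/-- Objective of Model R: reserve capacity procurement cost. -/
def RObj (CRp CRm : I → ℝ) (Rpa Rma : I → Ar → ℝ) : ℝ :=
  ∑ a, ∑ i, (CRp i * Rpa i a + CRm i * Rma i a)
/-- Feasibility of Model E (energy-only day-ahead LP) for fixed reserve schedule
`Rpa`, `Rma` and transmission-allocation parameters `X`. -/
def EFeas (n0 : N) (busI : I → N) (busJ : J → N) (AC : L → Prop)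
    (D : N → ℝ) (Pmax : I → ℝ) (What : J → ℝ)
    (fmax Bsus : L → ℝ) (Ainc : L → N → ℝ) (X : L → ℝ)
    (Rpa Rma : I → Ar → ℝ)
    (p : I → ℝ) (pW : J → ℝ) (dh : N → ℝ) (fh : L → ℝ) : Prop :=
  (∀ n, (∑ j, if busJ j = n then pW j else 0) + (∑ i, if busI i = n then p i else 0)
      - D n - ∑ l, Ainc l n * fh l = 0) ∧
  (∀ i, p i ≤ Pmax i - ∑ a, Rpa i a) ∧
  (∀ i, ∑ a, Rma i a ≤ p i) ∧
  (∀ j, pW j ≤ What j) ∧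
  (∀ l, AC l → fh l = Bsus l * ∑ n, Ainc l n * dh n) ∧
  (∀ l, |fh l| ≤ (1 - X l) * fmax l) ∧
  (dh n0 = 0) ∧
  (∀ i, 0 ≤ p i) ∧ (∀ j, 0 ≤ pW j)

/-- Objective of Model E: day-ahead energy cost. -/
def EObj (C : I → ℝ) (p : I → ℝ) : ℝ :=
  ∑ i, C i * p i
/-- any feasible point of Model R, combined with a feasible point of
Model E (for that reserve schedule and the same allocation `X`) and per-scenario
feasible points of Model B, yields a feasible point of Model S with objective
`zR + zE + ∑ ω, π ω * zB ω`; hence OptS is at most the in-sample expected cost of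
the sequential reserve-then-energy market design. -/
theorem optS_le_sequential_market
    (n0 : N) (busI : I → N) (busJ : J → N) (AC : L → Prop) (areaI : I → Ar)
    (π : Ω → ℝ) (C CRp CRm : I → ℝ) (Csh : ℝ)
    (D : N → ℝ) (Pmax : I → ℝ) (PWmax What : J → ℝ)
    (Rpmax Rmmax : I → ℝ) (RRp RRm : Ar → ℝ)
    (fmax Bsus : L → ℝ) (Ainc : L → N → ℝ) (Pst : J → Ω → ℝ)
    (X : L → ℝ) (M : Ar → Ar → Finset L)
    (hπ : ∀ ω, 0 ≤ π ω) (hπ1 : ∑ ω, π ω = 1)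
    (hC : ∀ i, 0 ≤ C i) (hCRp : ∀ i, 0 ≤ CRp i) (hCRm : ∀ i, 0 ≤ CRm i) (hCsh : 0 ≤ Csh)
    (hD : ∀ n, 0 ≤ D n) (hPmax : ∀ i, 0 ≤ Pmax i) (hPWmax : ∀ j, 0 ≤ PWmax j)
    (hRpmax : ∀ i, 0 ≤ Rpmax i) (hRmmax : ∀ i, 0 ≤ Rmmax i)
    (hRRp : ∀ a, 0 ≤ RRp a) (hRRm : ∀ a, 0 ≤ RRm a)
    (hfmax : ∀ l, 0 ≤ fmax l) (hBsus : ∀ l, 0 ≤ Bsus l)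
    (hAinc : ∀ l n, Ainc l n = -1 ∨ Ainc l n = 0 ∨ Ainc l n = 1)
    (hPst : ∀ j ω, 0 ≤ Pst j ω)
    (hWhat : ∀ j, 0 ≤ What j)
    -- X_l ∈ [0,1] and wind point forecasts do not exceed the wind capacities
    (hX : ∀ l, 0 ≤ X l ∧ X l ≤ 1)
    (hWle : ∀ j, What j ≤ PWmax j)
    -- a feasible point of Model R with objective value zR
    (Rpa Rma : I → Ar → ℝ) (zR : ℝ)
    (hRfeas : RFeas areaI Pmax Rpmax Rmmax RRp RRm fmax X M Rpa Rma)
    (hRobj : RObj CRp CRm Rpa Rma = zR)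
    -- a feasible point of Model E with objective value zE
    (p : I → ℝ) (pW : J → ℝ) (dh : N → ℝ) (fh : L → ℝ) (zE : ℝ)
    (hEfeas : EFeas n0 busI busJ AC D Pmax What fmax Bsus Ainc X Rpa Rma p pW dh fh)
    (hEobj : EObj C p = zE)
    -- for each scenario, a feasible point of Model B with objective value zB ω
    (rp rm : I → Ω → ℝ) (spill : J → Ω → ℝ) (lsh : N → Ω → ℝ)
    (dt : N → Ω → ℝ) (ft : L → Ω → ℝ) (zB : Ω → ℝ)
    (hBfeas : ∀ ω, BFeas n0 busI busJ AC D fmax Bsus Ainc pW fh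
        (fun i => ∑ a, Rpa i a) (fun i => ∑ a, Rma i a)
        (fun j => Pst j ω) (fun i => rp i ω) (fun i => rm i ω) (fun j => spill j ω)
        (fun n => lsh n ω) (fun n => dt n ω) (fun l => ft l ω))
    (hBobj : ∀ ω, BObj C Csh (fun i => rp i ω) (fun i => rm i ω) (fun n => lsh n ω) = zB ω) :
    SFeas n0 busI busJ AC D Pmax PWmax Rpmax Rmmax fmax Bsus Ainc Pst
        p pW (fun i => ∑ a, Rpa i a) (fun i => ∑ a, Rma i a)
        rp rm spill lsh dh dt fh ft ∧
    SObj π C CRp CRm Csh p (fun i => ∑ a, Rpa i a) (fun i => ∑ a, Rma i a) rp rm lsh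
      = zR + zE + ∑ ω, π ω * zB ω ∧
    sInf {z : ℝ | ∃ (p' : I → ℝ) (pW' : J → ℝ) (Rp' Rm' : I → ℝ)
        (rp' rm' : I → Ω → ℝ) (spill' : J → Ω → ℝ) (lsh' : N → Ω → ℝ)
        (dh' : N → ℝ) (dt' : N → Ω → ℝ) (fh' : L → ℝ) (ft' : L → Ω → ℝ),
        SFeas n0 busI busJ AC D Pmax PWmax Rpmax Rmmax fmax Bsus Ainc Pst
          p' pW' Rp' Rm' rp' rm' spill' lsh' dh' dt' fh' ft' ∧
        SObj π C CRp CRm Csh p' Rp' Rm' rp' rm' lsh' = z}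
      ≤ zR + zE + ∑ ω, π ω * zB ω := by
  obtain ⟨hR1, hR2, hR3, hR4, hR5, hR6, hR7, hR8, hR9⟩ := hRfeas
  obtain ⟨hE1, hE2, hE3, hE4, hE5, hE6, hE7, hE8, hE9⟩ := hEfeas
  have hB := hBfeas
  have hfeas : SFeas n0 busI busJ AC D Pmax PWmax Rpmax Rmmax fmax Bsus Ainc Pst
      p pW (fun i => ∑ a, Rpa i a) (fun i => ∑ a, Rma i a)
      rp rm spill lsh dh dt fh ft := by
    refine ⟨hE1, fun n ω => (hB ω).1 n, fun j => le_trans (hE4 j) (hWle j),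
      fun i => by have := hE2 i; simpa using by linarith,
      fun i => by have := hE3 i; simpa using by linarith,
      hR1, hR2, fun i ω => (hB ω).2.1 i, fun i ω => (hB ω).2.2.1 i,
      hE5, fun l ω h => (hB ω).2.2.2.1 l h,
      fun l => le_trans (hE6 l) ?_, fun l ω => (hB ω).2.2.2.2.1 l,
      fun n ω => (hB ω).2.2.2.2.2.1 n, fun j ω => (hB ω).2.2.2.2.2.2.1 j,
      hE7, fun ω => (hB ω).2.2.2.2.2.2.2.1,
      hE8, hE9, fun i => Finset.sum_nonneg fun a _ => hR8 i a,
      fun i => Finset.sum_nonneg fun a _ => hR9 i a,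
      fun i ω => (hB ω).2.2.2.2.2.2.2.2.1 i,
      fun i ω => (hB ω).2.2.2.2.2.2.2.2.2.1 i,
      fun j ω => (hB ω).2.2.2.2.2.2.2.2.2.2.1 j,
      fun n ω => (hB ω).2.2.2.2.2.2.2.2.2.2.2 n⟩
    nlinarith [(hX l).1, hfmax l]
  have hBobj' : ∀ ω, ((∑ i, C i * (rp i ω - rm i ω)) + ∑ n, Csh * lsh n ω) = zB ω :=
    fun ω => hBobj ω
  have hobj : SObj π C CRp CRm Csh p (fun i => ∑ a, Rpa i a) (fun i => ∑ a, Rma i a) rp rm lsh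
      = zR + zE + ∑ ω, π ω * zB ω := by
    have h1 : (∑ i, (C i * p i + CRp i * (∑ a, Rpa i a) + CRm i * (∑ a, Rma i a)))
        = zE + zR := by
      rw [← hRobj, ← hEobj]
      unfold RObj EObj
      rw [Finset.sum_comm]
      rw [← Finset.sum_add_distrib]
      apply Finset.sum_congr rfl
      intro i _
      rw [Finset.mul_sum, Finset.mul_sum, Finset.sum_add_distrib]
      ring
    unfold SObj
    simp_rw [hBobj']
    rw [h1]
    ring
  have hbdd : BddBelow {z : ℝ | ∃ (p' : I → ℝ) (pW' : J → ℝ) (Rp' Rm' : I → ℝ)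
        (rp' rm' : I → Ω → ℝ) (spill' : J → Ω → ℝ) (lsh' : N → Ω → ℝ)
        (dh' : N → ℝ) (dt' : N → Ω → ℝ) (fh' : L → ℝ) (ft' : L → Ω → ℝ),
        SFeas n0 busI busJ AC D Pmax PWmax Rpmax Rmmax fmax Bsus Ainc Pst
          p' pW' Rp' Rm' rp' rm' spill' lsh' dh' dt' fh' ft' ∧
        SObj π C CRp CRm Csh p' Rp' Rm' rp' rm' lsh' = z} := by
    refine ⟨-(∑ i, C i * Rmmax i), ?_⟩
    rintro z ⟨p', pW', Rp', Rm', rp', rm', spill', lsh', dh', dt', fh', ft', hf, hobj'⟩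
    obtain ⟨_, _, _, _, _, _, hRm'max, _, hrm', _, _, _, _, _, _, _, _,
      hp'0, _, hRp'0, hRm'0, hrp'0, _, _, hlsh'0⟩ := hf
    have hK0 : (0:ℝ) ≤ ∑ i, C i * Rmmax i :=
      Finset.sum_nonneg fun i _ => mul_nonneg (hC i) (hRmmax i)
    have h1 : 0 ≤ ∑ i, (C i * p' i + CRp i * Rp' i + CRm i * Rm' i) :=
      Finset.sum_nonneg fun i _ => by
        have a1 := mul_nonneg (hC i) (hp'0 i)
        have a2 := mul_nonneg (hCRp i) (hRp'0 i)
        have a3 := mul_nonneg (hCRm i) (hRm'0 i)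
        linarith
    have h2 : ∀ ω, -(∑ i, C i * Rmmax i)
        ≤ (∑ i, C i * (rp' i ω - rm' i ω)) + ∑ n, Csh * lsh' n ω := by
      intro ω
      have hsum : ∑ i, -(C i * Rmmax i) ≤ ∑ i, C i * (rp' i ω - rm' i ω) := by
        apply Finset.sum_le_sum
        intro i _
        have b1 : C i * rm' i ω ≤ C i * Rmmax i :=
          mul_le_mul_of_nonneg_left (le_trans (hrm' i ω) (hRm'max i)) (hC i)
        have b2 : 0 ≤ C i * rp' i ω := mul_nonneg (hC i) (hrp'0 i ω)
        nlinarith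
      have hlsh : 0 ≤ ∑ n, Csh * lsh' n ω :=
        Finset.sum_nonneg fun n _ => mul_nonneg hCsh (hlsh'0 n ω)
      rw [Finset.sum_neg_distrib] at hsum
      linarith
    have h3 : ∑ ω, π ω * (-(∑ i, C i * Rmmax i))
        ≤ ∑ ω, π ω * ((∑ i, C i * (rp' i ω - rm' i ω)) + ∑ n, Csh * lsh' n ω) :=
      Finset.sum_le_sum fun ω _ => mul_le_mul_of_nonneg_left (h2 ω) (hπ ω)
    have h4 : ∑ ω, π ω * (-(∑ i, C i * Rmmax i)) = -(∑ i, C i * Rmmax i) := by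
      rw [← Finset.sum_mul, hπ1, one_mul]
    rw [← hobj']
    unfold SObj
    linarith [h3, h4, h1]
  refine ⟨hfeas, hobj, csInf_le hbdd
    ⟨p, pW, _, _, rp, rm, spill, lsh, dh, dt, fh, ft, hfeas, hobj⟩⟩
end
end

section
/- Assume X_l ∈ [0,1] for every line l, and that the area reserve requirements dominate the system requirements: Σ_a RR_a^+ ≥ RR^{s,+} and Σ_a RR_a^- ≥ RR^{s,-}. Let (R^+_{ia}, R^-_{ia}) be any feasible point of Model R with objective value z^R and let (p, p^W, δ̂, f̂) be any feasible point of Model E (with reserve schedule R*_{ia} = R_{ia} and the same allocation X) with objective value z^E. Then the point (p, p^W, R_i^+ := Σ_a R^+_{ia}, R_i^- := Σ_a R^-_{ia}, δ̂, f̂) is feasible for Model D and its Model D objective value equals z^R + z^E. Consequently, the optimal day-ahead-stage (energy plus reserve capacity) cost of the deterministic co-optimization, OptD, is at most the total day-ahead-stage cost of any solution of the sequential reserve-then-energy clearing. -/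
open Finset MeasureTheory ProbabilityTheory

noncomputable section

variable {N I J L Ω Ar : Type*} [Fintype N] [Fintype I] [Fintype J] [Fintype L]
  [Fintype Ω] [Fintype Ar] [DecidableEq N] [DecidableEq Ar]
/-- if the area reserve requirements dominate the system-wide ones,
any feasible point of Model R combined with a corresponding feasible point of
Model E yields a feasible point of Model D with objective `zR + zE`;
hence OptD is at most the day-ahead-stage cost of the sequential clearing. -/
theorem optD_le_sequential_dayahead_cost
    (n0 : N) (busI : I → N) (busJ : J → N) (AC : L → Prop) (areaI : I → Ar)
    (C CRp CRm : I → ℝ)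
    (D : N → ℝ) (Pmax : I → ℝ) (What : J → ℝ)
    (Rpmax Rmmax : I → ℝ) (RRsp RRsm : ℝ) (RRp RRm : Ar → ℝ)
    (fmax Bsus : L → ℝ) (Ainc : L → N → ℝ)
    (X : L → ℝ) (M : Ar → Ar → Finset L)
    (hC : ∀ i, 0 ≤ C i) (hCRp : ∀ i, 0 ≤ CRp i) (hCRm : ∀ i, 0 ≤ CRm i)
    (hD : ∀ n, 0 ≤ D n) (hPmax : ∀ i, 0 ≤ Pmax i)
    (hRpmax : ∀ i, 0 ≤ Rpmax i) (hRmmax : ∀ i, 0 ≤ Rmmax i)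
    (hRRsp : 0 ≤ RRsp) (hRRsm : 0 ≤ RRsm)
    (hRRp : ∀ a, 0 ≤ RRp a) (hRRm : ∀ a, 0 ≤ RRm a)
    (hfmax : ∀ l, 0 ≤ fmax l) (hBsus : ∀ l, 0 ≤ Bsus l)
    (hAinc : ∀ l n, Ainc l n = -1 ∨ Ainc l n = 0 ∨ Ainc l n = 1)
    (hWhat : ∀ j, 0 ≤ What j)
    -- X_l ∈ [0,1]
    (hX : ∀ l, 0 ≤ X l ∧ X l ≤ 1)
    -- area reserve requirements dominate the system-wide requirements
    (hdomp : RRsp ≤ ∑ a, RRp a) (hdomm : RRsm ≤ ∑ a, RRm a)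
    -- a feasible point of Model R with objective value zR
    (Rpa Rma : I → Ar → ℝ) (zR : ℝ)
    (hRfeas : RFeas areaI Pmax Rpmax Rmmax RRp RRm fmax X M Rpa Rma)
    (hRobj : RObj CRp CRm Rpa Rma = zR)
    -- a feasible point of Model E with objective value zE
    (p : I → ℝ) (pW : J → ℝ) (dh : N → ℝ) (fh : L → ℝ) (zE : ℝ)
    (hEfeas : EFeas n0 busI busJ AC D Pmax What fmax Bsus Ainc X Rpa Rma p pW dh fh)
    (hEobj : EObj C p = zE) :
    DFeas n0 busI busJ AC D Pmax What Rpmax Rmmax RRsp RRsm fmax Bsus Ainc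
        p pW (fun i => ∑ a, Rpa i a) (fun i => ∑ a, Rma i a) dh fh ∧
    DObj C CRp CRm p (fun i => ∑ a, Rpa i a) (fun i => ∑ a, Rma i a) = zR + zE ∧
    sInf {z : ℝ | ∃ (p' : I → ℝ) (pW' : J → ℝ) (Rp' Rm' : I → ℝ)
        (dh' : N → ℝ) (fh' : L → ℝ),
        DFeas n0 busI busJ AC D Pmax What Rpmax Rmmax RRsp RRsm fmax Bsus Ainc
          p' pW' Rp' Rm' dh' fh' ∧
        DObj C CRp CRm p' Rp' Rm' = z}
      ≤ zR + zE := by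
  obtain ⟨hRp1, hRm1, hPsum, hRRp, hRRm, hMp, hMm, hRpnn, hRmnn⟩ := hRfeas
  obtain ⟨hbal, hpub, hplb, hpW, hac, hflow, hd0, hpnn, hpWnn⟩ := hEfeas
  have hRpsum : ∀ i, 0 ≤ ∑ a, Rpa i a := fun i => Finset.sum_nonneg fun a _ => hRpnn i a
  have hRmsum : ∀ i, 0 ≤ ∑ a, Rma i a := fun i => Finset.sum_nonneg fun a _ => hRmnn i a
  have hfeasD : DFeas n0 busI busJ AC D Pmax What Rpmax Rmmax RRsp RRsm fmax Bsus Ainc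
      p pW (fun i => ∑ a, Rpa i a) (fun i => ∑ a, Rma i a) dh fh := by
    refine ⟨hbal, hpW, fun i => by linarith [hpub i], fun i => by linarith [hplb i],
      hRp1, hRm1, ?_, ?_, hac, fun l => ?_, hd0, hpnn, hpWnn, hRpsum, hRmsum⟩
    · calc RRsp ≤ ∑ a, RRp a := hdomp
        _ ≤ ∑ a, ∑ i, Rpa i a := Finset.sum_le_sum fun a _ => hRRp a
        _ = ∑ i, ∑ a, Rpa i a := Finset.sum_comm
    · calc RRsm ≤ ∑ a, RRm a := hdomm
        _ ≤ ∑ a, ∑ i, Rma i a := Finset.sum_le_sum fun a _ => hRRm a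
        _ = ∑ i, ∑ a, Rma i a := Finset.sum_comm
    · have := hflow l
      have h1 : (1 - X l) * fmax l ≤ fmax l := by nlinarith [(hX l).1, (hX l).2, hfmax l]
      linarith
  have hobj : DObj C CRp CRm p (fun i => ∑ a, Rpa i a) (fun i => ∑ a, Rma i a) = zR + zE := by
    have : RObj CRp CRm Rpa Rma = ∑ i, (CRp i * ∑ a, Rpa i a + CRm i * ∑ a, Rma i a) := by
      rw [RObj, Finset.sum_comm]
      exact Finset.sum_congr rfl fun i _ => by rw [Finset.sum_add_distrib, Finset.mul_sum, Finset.mul_sum]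
    rw [DObj]
    simp only [add_assoc]
    rw [Finset.sum_add_distrib, ← EObj, hEobj, ← this, hRobj, add_comm]
  refine ⟨hfeasD, hobj, ?_⟩
  apply csInf_le
  · refine ⟨0, fun z hz => ?_⟩
    obtain ⟨p', pW', Rp', Rm', dh', fh', hf, hv⟩ := hz
    rw [← hv, DObj]
    obtain ⟨_,_,_,_,_,_,_,_,_,_,_,hp',_,hRp',hRm'⟩ := hf
    exact Finset.sum_nonneg fun i _ =>
      add_nonneg (add_nonneg (mul_nonneg (hC i) (hp' i)) (mul_nonneg (hCRp i) (hRp' i)))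
        (mul_nonneg (hCRm i) (hRm' i))
  · exact ⟨p, pW, fun i => ∑ a, Rpa i a, fun i => ∑ a, Rma i a, dh, fh, hfeasD, hobj⟩
end
end

section
/- Suppose the fixed inputs to Model B satisfy: p*_{W,j} ≥ 0 and P*_j ≥ 0 for all wind units j, R*_i^+, R*_i^- ≥ 0 for all units i, and (f̂*, δ̂*) satisfy δ̂*_{n0} = 0, f̂*_l = B_l Σ_n A_{ln} δ̂*_n for every AC line l, and |f̂*_l| ≤ f_l^max for every line l. If for every bus n the scheduled wind at n does not exceed the local demand plus realized wind at n, i.e. Σ_{j at n} p*_{W,j} ≤ D_n + Σ_{j at n} P*_j, then Model B is feasible: a feasible point exists with r_i^± = 0, f̃ = f̂*, δ̃ = δ̂*, load shedding l^sh_n = max(0, Σ_{j at n}(p*_{W,j} − P*_j)) at each bus, and wind spillage values p^spill_j ∈ [0, P*_j] at each bus summing to max(0, Σ_{j at n}(P*_j − p*_{W,j})). In particular, under this nodal condition the real-time balancing market always admits a feasible redispatch for every wind realization (complete recourse). -/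
open Finset MeasureTheory ProbabilityTheory

noncomputable section

variable {N I J L Ω Ar : Type*} [Fintype N] [Fintype I] [Fintype J] [Fintype L]
  [Fintype Ω] [Fintype Ar] [DecidableEq N] [DecidableEq Ar]
/-- complete recourse of the balancing market. If the fixed day-ahead
inputs are consistent (nonnegative schedules and reserves, network-consistent flows
within the line ratings) and, at every bus, the scheduled wind does not exceed the
local demand plus the realized wind, then Model B is feasible: the point with no
redispatch, unchanged flows and angles, nodal load shedding
`max 0 (∑_{j at n} (pWst j - Pst j))` and wind spillage in `[0, Pst j]` summing
nodally to `max 0 (∑_{j at n} (Pst j - pWst j))` is feasible. -/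
theorem balancing_market_complete_recourse
    (n0 : N) (busI : I → N) (busJ : J → N) (AC : L → Prop)
    (D : N → ℝ) (fmax Bsus : L → ℝ) (Ainc : L → N → ℝ)
    (hD : ∀ n, 0 ≤ D n) (hfmax : ∀ l, 0 ≤ fmax l) (hBsus : ∀ l, 0 ≤ Bsus l)
    (hAinc : ∀ l n, Ainc l n = -1 ∨ Ainc l n = 0 ∨ Ainc l n = 1)
    -- fixed inputs of Model B
    (pWst : J → ℝ) (Pst : J → ℝ) (Rpst Rmst : I → ℝ) (fhst : L → ℝ) (dhst : N → ℝ)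
    (hpWst : ∀ j, 0 ≤ pWst j) (hPst : ∀ j, 0 ≤ Pst j)
    (hRpst : ∀ i, 0 ≤ Rpst i) (hRmst : ∀ i, 0 ≤ Rmst i)
    (hdh0 : dhst n0 = 0)
    (hfAC : ∀ l, AC l → fhst l = Bsus l * ∑ n, Ainc l n * dhst n)
    (hfcap : ∀ l, |fhst l| ≤ fmax l)
    -- nodal condition: scheduled wind ≤ demand + realized wind at every bus
    (hnodal : ∀ n, (∑ j, if busJ j = n then pWst j else 0)
        ≤ D n + ∑ j, if busJ j = n then Pst j else 0) :
    ∃ spill : J → ℝ,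
      (∀ j, 0 ≤ spill j ∧ spill j ≤ Pst j) ∧
      (∀ n, (∑ j, if busJ j = n then spill j else 0)
          = max 0 (∑ j, if busJ j = n then Pst j - pWst j else 0)) ∧
      BFeas n0 busI busJ AC D fmax Bsus Ainc pWst fhst Rpst Rmst Pst
        (fun _ => 0) (fun _ => 0) spill
        (fun n => max 0 (∑ j, if busJ j = n then pWst j - Pst j else 0))
        dhst fhst := by
  classical
  set S : N → ℝ := fun n => ∑ j, if busJ j = n then Pst j else 0 with hSdef
  set W : N → ℝ := fun n => ∑ j, if busJ j = n then pWst j else 0 with hWdef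
  have hSnn : ∀ n, 0 ≤ S n := fun n =>
    Finset.sum_nonneg fun j _ => by by_cases h : busJ j = n <;> simp [h, hPst j]
  have hWnn : ∀ n, 0 ≤ W n := fun n =>
    Finset.sum_nonneg fun j _ => by by_cases h : busJ j = n <;> simp [h, hpWst j]
  set t : N → ℝ := fun n => if S n = 0 then 0 else max 0 (S n - W n) / S n with htdef
  have ht0 : ∀ n, 0 ≤ t n := by
    intro n
    simp only [htdef]
    split
    · exact le_refl 0
    · exact div_nonneg (le_max_left _ _) (hSnn n)
  have ht1 : ∀ n, t n ≤ 1 := by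
    intro n
    simp only [htdef]
    split
    · exact zero_le_one
    · rename_i h
      have hpos : 0 < S n := lt_of_le_of_ne (hSnn n) (Ne.symm h)
      rw [div_le_one hpos]
      exact max_le (hSnn n) (by linarith [hWnn n])
  set spill : J → ℝ := fun j => Pst j * t (busJ j) with hspdef
  have hsp0 : ∀ j, 0 ≤ spill j := fun j => mul_nonneg (hPst j) (ht0 _)
  have hsp1 : ∀ j, spill j ≤ Pst j := fun j => by
    calc Pst j * t (busJ j) ≤ Pst j * 1 := mul_le_mul_of_nonneg_left (ht1 _) (hPst j)
    _ = Pst j := mul_one _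
  have hkey : ∀ n, (∑ j, if busJ j = n then spill j else 0) = max 0 (S n - W n) := by
    intro n
    have hsum : (∑ j, if busJ j = n then spill j else 0) = S n * t n := by
      rw [hSdef, Finset.sum_mul]
      apply Finset.sum_congr rfl
      intro j _
      by_cases h : busJ j = n <;> simp [h, hspdef]
    rw [hsum]
    by_cases h : S n = 0
    · rw [h, zero_mul, eq_comm]
      exact max_eq_left (by linarith [hWnn n])
    · have hpos : 0 < S n := lt_of_le_of_ne (hSnn n) (Ne.symm h)
      simp only [htdef, if_neg h]
      field_simp
  refine ⟨spill, fun j => ⟨hsp0 j, hsp1 j⟩, ?_, ?_⟩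
  · intro n
    have : (∑ j, if busJ j = n then Pst j - pWst j else 0) = S n - W n := by
      rw [hSdef, hWdef, ← Finset.sum_sub_distrib]
      apply Finset.sum_congr rfl
      intro j _
      by_cases h : busJ j = n <;> simp [h]
    rw [this]; exact hkey n
  · refine ⟨?_, fun i => hRpst i, fun i => hRmst i, hfAC, hfcap, ?_, hsp1, hdh0,
      fun i => le_refl 0, fun i => le_refl 0, hsp0, fun n => le_max_left _ _⟩
    · intro n
      have h1 : (∑ i, if busI i = n then (0:ℝ) - 0 else 0) = 0 := by simp
      have h2 : (∑ l, Ainc l n * (fhst l - fhst l)) = 0 := by simp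
      have h3 : (∑ j, if busJ j = n then Pst j - pWst j - spill j else 0)
          = S n - W n - max 0 (S n - W n) := by
        have e : (∑ j, if busJ j = n then Pst j - pWst j - spill j else 0)
            = (∑ j, if busJ j = n then Pst j else 0)
              - (∑ j, if busJ j = n then pWst j else 0)
              - (∑ j, if busJ j = n then spill j else 0) := by
          rw [← Finset.sum_sub_distrib, ← Finset.sum_sub_distrib]
          apply Finset.sum_congr rfl
          intro j _
          by_cases h : busJ j = n <;> simp [h]
        rw [e, hkey n]
      have h4 : (∑ j, if busJ j = n then pWst j - Pst j else 0) = W n - S n := by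
        rw [hSdef, hWdef, ← Finset.sum_sub_distrib]
        apply Finset.sum_congr rfl
        intro j _
        by_cases h : busJ j = n <;> simp [h]
      simp only [h1, h2, h3, h4]
      rcases le_total (S n) (W n) with hc | hc
      · have e1 : (0:ℝ) ⊔ (W n - S n) = W n - S n := max_eq_right (by linarith)
        have e2 : (0:ℝ) ⊔ (S n - W n) = 0 := max_eq_left (by linarith)
        rw [e1, e2]; ring
      · have e1 : (0:ℝ) ⊔ (W n - S n) = 0 := max_eq_left (by linarith)
        have e2 : (0:ℝ) ⊔ (S n - W n) = S n - W n := max_eq_right (by linarith)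
        rw [e1, e2]; ring
    · intro n
      have h4 : (∑ j, if busJ j = n then pWst j - Pst j else 0) = W n - S n := by
        rw [hSdef, hWdef, ← Finset.sum_sub_distrib]
        apply Finset.sum_congr rfl
        intro j _
        by_cases h : busJ j = n <;> simp [h]
      simp only [h4]
      exact max_le (hD n) (by linarith [hnodal n])
end
end
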